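/- arXiv:1601.07580 — 3 statements merged into one kernel-verified Lean document; each statement's English description precedes it below -/
import Mathlib

section
/- Let u : ℝ → ℂ be continuous and let M be the fundamental solution of the ZS system at (0, (u, u)) (spectral parameter λ = 0). Then trace(M(1)) = 2·cosh(∫₀¹ u(x) dx). -/
open Complex Matrix

/-- `M` is the fundamental solution of the Zakharov–Shabat system at `(lam, (p, q))`:
`M' = !![-i lam, i p; -i q, i lam] * M`, `M 0 = 1`. -/
def IsZSFund (lam : ℂ) (p q : ℝ → ℂ) (M : ℝ → Matrix (Fin 2) (Fin 2) ℂ) : Prop :=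
  M 0 = 1 ∧ ∀ (x : ℝ) (i j : Fin 2), HasDerivAt (fun t => M t i j)
    ((!![-I * lam, I * p x; -I * q x, I * lam] * M x) i j) x

/-!
At `λ = 0` the symmetric Zakharov–Shabat matrix is `u(x) • K` with `K = !![0, i; -i, 0]`, and
`K² = 1`. All coefficient matrices are therefore multiples of one matrix, so the system can be
integrated explicitly: with `U(x) = ∫₀ˣ u`, the fundamental solution is
`exp (U(x) K) = cosh (U x) • 1 + sinh (U x) • K`, whose trace is `2 cosh (U x)` since `trace K = 0`.
-/

section Entrywise

variable {𝕜 E : Type*} {m n : Type*}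

def HasEntrywiseDerivAt [NontriviallyNormedField 𝕜] [NormedAddCommGroup E] [NormedSpace 𝕜 E]
    (F : 𝕜 → Matrix m n E) (F' : Matrix m n E) (x : 𝕜) : Prop :=
  ∀ i j, HasDerivAt (fun t => F t i j) (F' i j) x

theorem HasEntrywiseDerivAt.mul [NontriviallyNormedField 𝕜] [NormedCommRing E]
    [NormedAlgebra 𝕜 E] {p : Type*} [Fintype n] {A : 𝕜 → Matrix m n E} {B : 𝕜 → Matrix n p E}
    {A' : Matrix m n E} {B' : Matrix n p E} {x : 𝕜}
    (hA : HasEntrywiseDerivAt A A' x) (hB : HasEntrywiseDerivAt B B' x) :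
    HasEntrywiseDerivAt (fun t => A t * B t) (A' * B x + A x * B') x := by
  intro i k
  simp only [mul_apply, Matrix.add_apply, ← Finset.sum_add_distrib]
  exact HasDerivAt.fun_sum fun j _ => (hA i j).fun_mul (hB j k)

theorem is_const_of_hasEntrywiseDerivAt_zero [RCLike 𝕜] [NormedAddCommGroup E]
    [NormedSpace 𝕜 E] {F : 𝕜 → Matrix m n E} (hF : ∀ x, HasEntrywiseDerivAt F 0 x) (x y : 𝕜) :
    F x = F y := by
  ext i j
  exact is_const_of_deriv_eq_zero (fun t => (hF t i j).differentiableAt)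
    (fun t => (hF t i j).deriv) x y

end Entrywise

namespace Matrix

variable {n : Type*} [DecidableEq n] (K : Matrix n n ℂ)

noncomputable def coshSinh (z : ℂ) : Matrix n n ℂ :=
  cosh z • 1 + sinh z • K

@[simp]
theorem coshSinh_zero : coshSinh K 0 = 1 := by
  simp [coshSinh]

variable [Fintype n]

theorem commute_coshSinh (z : ℂ) : Commute K (coshSinh K z) := by
  simp only [coshSinh]
  exact ((Commute.one_right K).smul_right _).add_right ((Commute.refl K).smul_right _)

theorem trace_coshSinh (z : ℂ) :
    (coshSinh K z).trace = cosh z * Fintype.card n + sinh z * K.trace := by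
  simp [coshSinh, trace_add, trace_smul]

variable {K}

theorem coshSinh_mul_coshSinh_neg (hK : K * K = 1) (z : ℂ) :
    coshSinh K z * coshSinh K (-z) = 1 := by
  calc coshSinh K z * coshSinh K (-z)
      = (cosh z ^ 2 - sinh z ^ 2) • (1 : Matrix n n ℂ) + sinh z ^ 2 • (1 - K * K) := by
        simp only [coshSinh, cosh_neg, sinh_neg, add_mul, mul_add, smul_mul_smul_comm,
          Matrix.one_mul, Matrix.mul_one, smul_sub, sub_smul]
        module
    _ = 1 := by rw [cosh_sq_sub_sinh_sq, hK]; simp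

theorem hasEntrywiseDerivAt_coshSinh (hK : K * K = 1) {U : ℝ → ℂ} {a : ℂ} {x : ℝ}
    (hU : HasDerivAt U a x) :
    HasEntrywiseDerivAt (fun t => coshSinh K (U t)) (a • K * coshSinh K (U x)) x := by
  have hcosh := (hasDerivAt_cosh (U x)).comp x hU
  have hsinh := (hasDerivAt_sinh (U x)).comp x hU
  have hderiv : a • K * coshSinh K (U x) = (sinh (U x) * a) • 1 + (cosh (U x) * a) • K := by
    simp only [coshSinh, Matrix.mul_add, Matrix.mul_smul, Matrix.smul_mul, Matrix.mul_one, hK,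
      smul_smul]
    module
  intro i j
  rw [hderiv]
  simpa [coshSinh] using
    (hcosh.mul_const ((1 : Matrix n n ℂ) i j)).fun_add (hsinh.mul_const (K i j))

theorem eq_coshSinh_of_hasEntrywiseDerivAt (hK : K * K = 1) {a U : ℝ → ℂ}
    (hU : ∀ x, HasDerivAt U (a x) x) (hU0 : U 0 = 0) {M : ℝ → Matrix n n ℂ}
    (hM : ∀ x, HasEntrywiseDerivAt M (a x • K * M x) x) (hM0 : M 0 = 1) (x : ℝ) :
    M x = coshSinh K (U x) := by
  have hconst (x : ℝ) : HasEntrywiseDerivAt (fun t => coshSinh K (-U t) * M t) 0 x := by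
    have h := (hasEntrywiseDerivAt_coshSinh hK (hU x).fun_neg).mul (hM x)
    -- `K` commutes with `coshSinh K z`, so the two terms of the product rule cancel.
    rwa [← Matrix.mul_assoc, neg_smul, Matrix.neg_mul, Matrix.neg_mul,
      ((commute_coshSinh K _).smul_left (a x)).eq, neg_add_cancel] at h
  have hinv : coshSinh K (-U x) * M x = 1 := by
    simpa [hU0, hM0] using is_const_of_hasEntrywiseDerivAt_zero hconst x 0
  calc M x = coshSinh K (U x) * (coshSinh K (-U x) * M x) := by
        rw [← Matrix.mul_assoc, coshSinh_mul_coshSinh_neg hK, Matrix.one_mul]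
    _ = coshSinh K (U x) := by rw [hinv, Matrix.mul_one]

end Matrix

theorem zs_discriminant_at_zero
    (u : ℝ → ℂ) (hu : Continuous u)
    (M : ℝ → Matrix (Fin 2) (Fin 2) ℂ)
    (hM : IsZSFund 0 u u M) :
    (M 1).trace = 2 * Complex.cosh (∫ x in (0:ℝ)..1, u x) := by
  set K : Matrix (Fin 2) (Fin 2) ℂ := !![0, I; -I, 0]
  have hK : K * K = 1 := by
    ext i j; fin_cases i <;> fin_cases j <;> simp [K]
  have hU (x : ℝ) : HasDerivAt (fun y => ∫ t in (0:ℝ)..y, u t) (u x) x :=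
    (hu.integral_hasStrictDerivAt 0 x).hasDerivAt
  have hZS (x : ℝ) : !![-I * 0, I * u x; -I * u x, I * 0] = u x • K := by
    ext i j; fin_cases i <;> fin_cases j <;> simp [K, mul_comm]
  have hMK (x : ℝ) : HasEntrywiseDerivAt M (u x • K * M x) x := by
    rw [← hZS x]
    exact hM.2 x
  rw [eq_coshSinh_of_hasEntrywiseDerivAt hK hU (by simp) hMK hM.1, trace_coshSinh]
  simp only [K, trace_fin_two_of, Fintype.card_fin, Nat.cast_ofNat, add_zero, mul_zero]
  ring
end

section
/- Let λ ∈ ℂ and let φ₋, φ₊ : ℝ → ℂ be continuous. Let M be the fundamental solution of the ZS system at (λ, (φ₋, φ₊)) and let N be the fundamental solution of the ZS system at (-λ, (x ↦ φ₋(1-x), x ↦ φ₊(1-x))). Then M(1) is invertible and N(x) = P * J * M(1-x) * (M(1))⁻¹ * J⁻¹ * P for all x ∈ ℝ, where P = !![0, 1; 1, 0] and J = !![0, 1; -1, 0]. -/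
/-!
Conjugating by `P * J = J⁻¹ * P = diag(-1, 1)` and reversing time turns
`x ↦ M (1 - x) * (M 1)⁻¹` into a fundamental solution of the system at `(-λ, Tφ)`, so it equals
`N` by uniqueness. Uniqueness needs no continuity of the potentials: for a 2×2 system
`Y' = B Y` with `trace B = 0` one has `adjugate B = -B`, so `adjugate Y * Z` is constant for
any two solutions `Y`, `Z`; with `Z = Y` this is Liouville's formula `det Y = const`.
-/

open Complex Matrix

section MatrixCalculus

variable {m n l : Type*} {E : Type*} [NormedAddCommGroup E] [NormedSpace ℝ E]

theorem Matrix.hasDerivAt_iff [Fintype n] {M : ℝ → Matrix m n E} {M' : Matrix m n E} {x : ℝ} :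
    HasDerivAt M M' x ↔ ∀ i j, HasDerivAt (fun t => M t i j) (M' i j) x :=
  hasDerivAt_pi (φ := fun t i => M t i).trans
    (forall_congr' fun i => hasDerivAt_pi (φ := fun t => M t i))

theorem HasDerivAt.matrix_comp_const_sub [Fintype n]
    {M : ℝ → Matrix m n E} {M' : Matrix m n E} (c x : ℝ) (hM : HasDerivAt M M' (c - x)) :
    HasDerivAt (fun t => M (c - t)) (-M') x := by
  rw [Matrix.hasDerivAt_iff] at *
  exact fun i j => (hM i j).comp_const_sub c x

theorem Matrix.eq_of_hasDerivAt_zero [Fintype n]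
    {Y : ℝ → Matrix m n E} (h : ∀ t, HasDerivAt Y 0 t) (t s : ℝ) : Y t = Y s := by
  ext i j
  have hij (t : ℝ) : HasDerivAt (fun t => Y t i j) 0 t := Matrix.hasDerivAt_iff.1 (h t) i j
  exact is_const_of_deriv_eq_zero (fun t => (hij t).differentiableAt) (fun t => (hij t).deriv) t s

variable {𝕜 : Type*} [RCLike 𝕜]

theorem HasDerivAt.matrix_mul [Fintype n] [Fintype l] {A : ℝ → Matrix m n 𝕜}
    {B : ℝ → Matrix n l 𝕜} {A' : Matrix m n 𝕜} {B' : Matrix n l 𝕜} {x : ℝ}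
    (hA : HasDerivAt A A' x) (hB : HasDerivAt B B' x) :
    HasDerivAt (fun t => A t * B t) (A' * B x + A x * B') x := by
  rw [Matrix.hasDerivAt_iff] at *
  intro i j
  simp only [Matrix.add_apply, mul_apply, ← Finset.sum_add_distrib]
  exact HasDerivAt.fun_sum fun k _ => (hA i k).mul (hB k j)

theorem HasDerivAt.matrix_const_mul_mul_const [Fintype n] [Fintype l] {k : Type*} [Fintype k]
    {M : ℝ → Matrix n l 𝕜} {M' : Matrix n l 𝕜} {x : ℝ} (A : Matrix m n 𝕜) (B : Matrix l k 𝕜)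
    (hM : HasDerivAt M M' x) :
    HasDerivAt (fun t => A * M t * B) (A * M' * B) x := by
  have hA : HasDerivAt (fun _ => A) 0 x :=
    Matrix.hasDerivAt_iff.2 fun _ _ => hasDerivAt_const x _
  have hB : HasDerivAt (fun _ => B) 0 x :=
    Matrix.hasDerivAt_iff.2 fun _ _ => hasDerivAt_const x _
  simpa using (hA.matrix_mul hM).matrix_mul hB

theorem HasDerivAt.matrix_adjugate_fin_two {A : ℝ → Matrix (Fin 2) (Fin 2) 𝕜}
    {A' : Matrix (Fin 2) (Fin 2) 𝕜} {x : ℝ} (hA : HasDerivAt A A' x) :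
    HasDerivAt (fun t => adjugate (A t)) (adjugate A') x := by
  rw [Matrix.hasDerivAt_iff] at *
  simp only [adjugate_fin_two, Fin.forall_fin_two, of_apply, cons_val', cons_val_zero,
    cons_val_one, empty_val', cons_val_fin_one] at hA ⊢
  exact ⟨⟨hA.2.2, hA.1.2.neg⟩, hA.2.1.neg, hA.1.1⟩

end MatrixCalculus

theorem Matrix.adjugate_add_self_fin_two {R : Type*} [CommRing R]
    (B : Matrix (Fin 2) (Fin 2) R) :
    adjugate B + B = trace B • 1 := by
  ext i j
  fin_cases i <;> fin_cases j <;> simp [adjugate_fin_two, trace_fin_two, add_comm]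

section TracelessSystem

variable {𝕜 : Type*} [RCLike 𝕜] {B Y Z : ℝ → Matrix (Fin 2) (Fin 2) 𝕜}

theorem adjugate_mul_eq_of_traceless (hB : ∀ t, trace (B t) = 0)
    (hY : ∀ t, HasDerivAt Y (B t * Y t) t) (hZ : ∀ t, HasDerivAt Z (B t * Z t) t) (t s : ℝ) :
    adjugate (Y t) * Z t = adjugate (Y s) * Z s := by
  refine Matrix.eq_of_hasDerivAt_zero (Y := fun t => adjugate (Y t) * Z t) (fun t => ?_) t s
  convert (hY t).matrix_adjugate_fin_two.matrix_mul (hZ t) using 1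
  rw [adjugate_mul_distrib, mul_assoc, ← mul_add, ← add_mul, adjugate_add_self_fin_two, hB,
    zero_smul, zero_mul, mul_zero]

theorem det_eq_of_traceless (hB : ∀ t, trace (B t) = 0)
    (hY : ∀ t, HasDerivAt Y (B t * Y t) t) (t s : ℝ) : det (Y t) = det (Y s) := by
  simpa [adjugate_mul] using congrArg (· 0 0) (adjugate_mul_eq_of_traceless hB hY hY t s)

theorem eq_of_traceless_of_eq (hB : ∀ t, trace (B t) = 0)
    (hY : ∀ t, HasDerivAt Y (B t * Y t) t) (hZ : ∀ t, HasDerivAt Z (B t * Z t) t) {s : ℝ}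
    (hs : Y s = Z s) (hdet : IsUnit (det (Y s))) (t : ℝ) : Y t = Z t := by
  have hadj : adjugate (Y t) * Z t = adjugate (Y t) * Y t := by
    rw [adjugate_mul_eq_of_traceless hB hY hZ t s, adjugate_mul_eq_of_traceless hB hY hY t s, hs]
  have hsmul : det (Y t) • Z t = det (Y t) • Y t :=
    calc det (Y t) • Z t = Y t * adjugate (Y t) * Z t := by rw [mul_adjugate, smul_one_mul]
      _ = Y t * adjugate (Y t) * Y t := by rw [mul_assoc, hadj, ← mul_assoc]
      _ = det (Y t) • Y t := by rw [mul_adjugate, smul_one_mul]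
  rw [det_eq_of_traceless hB hY t s] at hsmul
  exact (hdet.smul_left_cancel.1 hsmul).symm

end TracelessSystem

def zsMatrix (lam : ℂ) (p q : ℝ → ℂ) (x : ℝ) : Matrix (Fin 2) (Fin 2) ℂ :=
  !![-I * lam, I * p x; -I * q x, I * lam]

section ZakharovShabat

variable {lam : ℂ} {p q : ℝ → ℂ} {M N : ℝ → Matrix (Fin 2) (Fin 2) ℂ}

theorem trace_zsMatrix (x : ℝ) : trace (zsMatrix lam p q x) = 0 := by
  simp [zsMatrix, trace_fin_two]

theorem neg_conj_zsMatrix_sub (c x : ℝ) :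
    -(!![-1, 0; 0, 1] * zsMatrix lam p q (c - x) * !![-1, 0; 0, 1]) =
      zsMatrix (-lam) (fun x => p (c - x)) (fun x => q (c - x)) x := by
  ext i j
  fin_cases i <;> fin_cases j <;> simp [zsMatrix]

theorem isZSFund_iff :
    IsZSFund lam p q M ↔ M 0 = 1 ∧ ∀ x, HasDerivAt M (zsMatrix lam p q x * M x) x := by
  simp only [IsZSFund, zsMatrix, Matrix.hasDerivAt_iff]

namespace IsZSFund

theorem det_eq_one (hM : IsZSFund lam p q M) (x : ℝ) : det (M x) = 1 := by
  rw [isZSFund_iff] at hM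
  rw [det_eq_of_traceless trace_zsMatrix hM.2 x 0, hM.1, det_one]

theorem isUnit_det (hM : IsZSFund lam p q M) (x : ℝ) : IsUnit (det (M x)) := by
  rw [hM.det_eq_one x]
  exact isUnit_one

theorem unique (hM : IsZSFund lam p q M) (hN : IsZSFund lam p q N) : M = N := by
  funext x
  have hdet := hM.isUnit_det 0
  rw [isZSFund_iff] at hM hN
  exact eq_of_traceless_of_eq trace_zsMatrix hM.2 hN.2 (hM.1.trans hN.1.symm) hdet x

theorem reflect (hM : IsZSFund lam p q M) (c : ℝ) :
    IsZSFund (-lam) (fun x => p (c - x)) (fun x => q (c - x))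
      (fun x => !![-1, 0; 0, 1] * M (c - x) * (M c)⁻¹ * !![-1, 0; 0, 1]) := by
  have hK : (!![-1, 0; 0, 1] : Matrix (Fin 2) (Fin 2) ℂ) * !![-1, 0; 0, 1] = 1 := by
    simp [one_fin_two]
  have hKK (X : Matrix (Fin 2) (Fin 2) ℂ) : !![-1, 0; 0, 1] * (!![-1, 0; 0, 1] * X) = X := by
    rw [← mul_assoc, hK, one_mul]
  have hdet := hM.isUnit_det c
  rw [isZSFund_iff] at hM ⊢
  refine ⟨by rw [sub_zero, mul_assoc _ (M c), mul_nonsing_inv _ hdet, mul_one, hK], fun x => ?_⟩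
  convert ((hM.2 (c - x)).matrix_comp_const_sub c x).matrix_const_mul_mul_const
    !![-1, 0; 0, 1] ((M c)⁻¹ * !![-1, 0; 0, 1]) using 1
  · simp only [mul_assoc]
  rw [← neg_conj_zsMatrix_sub]
  simp only [neg_mul, mul_neg, mul_assoc, hKK]

end IsZSFund

end ZakharovShabat

theorem zs_fund_T_symmetry_general
    (lam : ℂ) (φm φp : ℝ → ℂ)
    (M N : ℝ → Matrix (Fin 2) (Fin 2) ℂ)
    (hM : IsZSFund lam φm φp M)
    (hN : IsZSFund (-lam) (fun x => φm (1 - x)) (fun x => φp (1 - x)) N) :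
    IsUnit (M 1) ∧
    ∀ x : ℝ, N x = !![0, 1; 1, 0] * !![0, 1; -1, 0] * M (1 - x) * (M 1)⁻¹ *
      (!![0, 1; -1, 0] : Matrix (Fin 2) (Fin 2) ℂ)⁻¹ * !![0, 1; 1, 0] := by
  have hJinv : (!![0, 1; -1, 0] : Matrix (Fin 2) (Fin 2) ℂ)⁻¹ = !![0, -1; 1, 0] :=
    inv_eq_left_inv (by simp [one_fin_two])
  have hPJ : (!![0, 1; 1, 0] * !![0, 1; -1, 0] : Matrix (Fin 2) (Fin 2) ℂ) = !![-1, 0; 0, 1] := by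
    simp
  have hJP : (!![0, -1; 1, 0] * !![0, 1; 1, 0] : Matrix (Fin 2) (Fin 2) ℂ) = !![-1, 0; 0, 1] := by
    simp
  refine ⟨(isUnit_iff_isUnit_det _).2 (hM.isUnit_det 1), fun x => ?_⟩
  rw [hN.unique (hM.reflect 1), mul_assoc _ _ !![0, 1; 1, 0], hJinv, hPJ, hJP]

theorem zs_fund_T_symmetry
    (lam : ℂ) (φm φp : ℝ → ℂ) (hm : Continuous φm) (hp : Continuous φp)
    (M N : ℝ → Matrix (Fin 2) (Fin 2) ℂ)
    (hM : IsZSFund lam φm φp M)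
    (hN : IsZSFund (-lam) (fun x => φm (1 - x)) (fun x => φp (1 - x)) N) :
    IsUnit (M 1) ∧
    ∀ x : ℝ, N x = !![0, 1; 1, 0] * !![0, 1; -1, 0] * M (1 - x) * (M 1)⁻¹ *
      (!![0, 1; -1, 0] : Matrix (Fin 2) (Fin 2) ℂ)⁻¹ * !![0, 1; 1, 0] :=
  zs_fund_T_symmetry_general lam φm φp M N hM hN
end

section
/- Let λ ∈ ℂ and let w : ℝ → ℂ be continuous. Let M₊ be the fundamental solution of the ZS system at (λ, (w, w)) and let M₋ be the fundamental solution of the ZS system at (-λ, (w, w)). Then trace(M₊(1)) = trace(M₋(1)); that is, for a potential φ with φ₋ = φ₊ the Zakharov–Shabat discriminant Δ(λ, φ) is an even function of λ. -/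
/-!
Conjugation by `P = !![0, 1; -1, 0]` swaps the diagonal entries of a `2 × 2` matrix and exchanges
the off-diagonal ones up to sign, so it carries the Zakharov–Shabat system at `(λ, (p, q))` to
the one at `(-λ, (q, p))`. For `p = q = w` the conjugate `P M₊ P⁻¹` is therefore a fundamental
solution at `-λ`, and by uniqueness it is `M₋`; taking traces gives the claim.

Uniqueness comes from the adjugate: for a trace-free `2 × 2` coefficient `B` the adjugate of a
solution of `Y' = B Y` satisfies `X' = -X B`, because `adj (B Y) = adj Y * adj B = -adj Y * B`.
Hence `adj Y * Z` is constant for any two solutions `Y`, `Z`.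
-/

open Complex Matrix

section EntrywiseDeriv

variable {𝕜 : Type*} [NontriviallyNormedField 𝕜] {x : 𝕜}

theorem Matrix.hasDerivAt_mul_apply {𝔸 : Type*} [NormedRing 𝔸] [NormedAlgebra 𝕜 𝔸]
    {l m n : Type*} [Fintype m] {A : 𝕜 → Matrix l m 𝔸} {B : 𝕜 → Matrix m n 𝔸}
    {A' : Matrix l m 𝔸} {B' : Matrix m n 𝔸}
    (hA : ∀ i j, HasDerivAt (fun t => A t i j) (A' i j) x)
    (hB : ∀ i j, HasDerivAt (fun t => B t i j) (B' i j) x) (i : l) (k : n) :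
    HasDerivAt (fun t => (A t * B t) i k) ((A' * B x + A x * B') i k) x := by
  simp only [add_apply, mul_apply, ← Finset.sum_add_distrib]
  exact HasDerivAt.fun_sum fun j _ => (hA i j).mul (hB j k)

theorem Matrix.hasDerivAt_adjugate_fin_two_apply {𝔸 : Type*} [NormedCommRing 𝔸]
    [NormedAlgebra 𝕜 𝔸] {A : 𝕜 → Matrix (Fin 2) (Fin 2) 𝔸} {A' : Matrix (Fin 2) (Fin 2) 𝔸}
    (hA : ∀ i j, HasDerivAt (fun t => A t i j) (A' i j) x) (i j : Fin 2) :
    HasDerivAt (fun t => adjugate (A t) i j) (adjugate A' i j) x := by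
  fin_cases i <;> fin_cases j <;> simp only [adjugate_fin_two]
  exacts [hA 1 1, (hA 0 1).neg, (hA 1 0).neg, hA 0 0]

end EntrywiseDeriv

theorem Matrix.adjugate_fin_two_eq_neg_of_trace_eq_zero {R : Type*} [CommRing R]
    {B : Matrix (Fin 2) (Fin 2) R} (hB : trace B = 0) : adjugate B = -B := by
  rw [trace_fin_two] at hB
  ext i j
  fin_cases i <;> fin_cases j <;>
    simp only [Fin.zero_eta, Fin.mk_one, Fin.isValue, adjugate_fin_two, of_apply, cons_val',
      cons_val_zero, cons_val_one, cons_val_fin_one, neg_apply] <;>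
    linear_combination hB

section FundamentalSolution

variable {𝕜 𝔸 : Type*} [RCLike 𝕜] [NormedCommRing 𝔸] [NormedAlgebra 𝕜 𝔸]
  {n : Type*} [Fintype n] [DecidableEq n]

def IsFundamentalSolution (B M : 𝕜 → Matrix n n 𝔸) : Prop :=
  M 0 = 1 ∧ ∀ (x : 𝕜) (i j : n), HasDerivAt (fun t => M t i j) ((B x * M x) i j) x

theorem IsFundamentalSolution.units_conj {B M : 𝕜 → Matrix n n 𝔸}
    (hM : IsFundamentalSolution B M) (P : (Matrix n n 𝔸)ˣ) :
    IsFundamentalSolution (fun x => P.val * B x * P⁻¹.val) (fun x => P.val * M x * P⁻¹.val) := by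
  refine ⟨by simp [hM.1], fun x i j => ?_⟩
  have hconst (C : Matrix n n 𝔸) :
      ∀ i j, HasDerivAt (fun _ : 𝕜 => C i j) ((0 : Matrix n n 𝔸) i j) x :=
    fun _ _ => hasDerivAt_const _ _
  convert hasDerivAt_mul_apply (hasDerivAt_mul_apply (hconst _) (hM.2 x)) (hconst _) i j using 2
  simp [Matrix.mul_assoc]

theorem IsFundamentalSolution.adjugate_mul_eq_one {B Y Z : 𝕜 → Matrix (Fin 2) (Fin 2) 𝔸}
    (hB : ∀ x, trace (B x) = 0) (hY : IsFundamentalSolution B Y)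
    (hZ : IsFundamentalSolution B Z) (x : 𝕜) : adjugate (Y x) * Z x = 1 := by
  have hderiv : ∀ t i j, HasDerivAt (fun s => (adjugate (Y s) * Z s) i j) 0 t := by
    intro t i j
    convert hasDerivAt_mul_apply (hasDerivAt_adjugate_fin_two_apply (hY.2 t)) (hZ.2 t) i j
    rw [adjugate_mul_distrib, adjugate_fin_two_eq_neg_of_trace_eq_zero (hB t)]
    simp [Matrix.mul_assoc]
  ext i j
  calc (adjugate (Y x) * Z x) i j = (adjugate (Y 0) * Z 0) i j :=
        is_const_of_deriv_eq_zero (fun t => (hderiv t i j).differentiableAt)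
          (fun t => (hderiv t i j).deriv) x 0
    _ = (1 : Matrix (Fin 2) (Fin 2) 𝔸) i j := by simp [hY.1, hZ.1]

theorem IsFundamentalSolution.unique_of_trace_eq_zero {B Y Z : 𝕜 → Matrix (Fin 2) (Fin 2) 𝔸}
    (hB : ∀ x, trace (B x) = 0) (hY : IsFundamentalSolution B Y)
    (hZ : IsFundamentalSolution B Z) : Y = Z := by
  funext x
  have hYY : Y x * adjugate (Y x) = 1 := mul_eq_one_comm.mp (hY.adjugate_mul_eq_one hB hY x)
  calc Y x = Y x * (adjugate (Y x) * Z x) := by rw [hY.adjugate_mul_eq_one hB hZ x, mul_one]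
    _ = Z x := by rw [← Matrix.mul_assoc, hYY, one_mul]

end FundamentalSolution

section ZakharovShabat

variable {lam : ℂ} {p q : ℝ → ℂ} {M N : ℝ → Matrix (Fin 2) (Fin 2) ℂ}

def zsCoeff (lam : ℂ) (p q : ℝ → ℂ) (x : ℝ) : Matrix (Fin 2) (Fin 2) ℂ :=
  !![-I * lam, I * p x; -I * q x, I * lam]

theorem isZSFund_iff_s11 : IsZSFund lam p q M ↔ IsFundamentalSolution (zsCoeff lam p q) M :=
  Iff.rfl

theorem trace_zsCoeff (lam : ℂ) (p q : ℝ → ℂ) (x : ℝ) : trace (zsCoeff lam p q x) = 0 := by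
  simp [zsCoeff, trace_fin_two]

theorem IsZSFund.unique_s11 (hM : IsZSFund lam p q M) (hN : IsZSFund lam p q N) : M = N :=
  (isZSFund_iff_s11.mp hM).unique_of_trace_eq_zero (trace_zsCoeff lam p q) (isZSFund_iff_s11.mp hN)

def zsSymmetry : (Matrix (Fin 2) (Fin 2) ℂ)ˣ where
  val := !![0, 1; -1, 0]
  inv := !![0, -1; 1, 0]
  val_inv := by simp [one_fin_two]
  inv_val := by simp [one_fin_two]

theorem zsSymmetry_conj_zsCoeff (lam : ℂ) (p q : ℝ → ℂ) (x : ℝ) :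
    zsSymmetry.val * zsCoeff lam p q x * zsSymmetry⁻¹.val = zsCoeff (-lam) q p x := by
  simp [zsSymmetry, zsCoeff]

theorem IsZSFund.units_conj_zsSymmetry (hM : IsZSFund lam p q M) :
    IsZSFund (-lam) q p (fun x => zsSymmetry.val * M x * zsSymmetry⁻¹.val) :=
  isZSFund_iff_s11.mpr <| by
    simpa only [zsSymmetry_conj_zsCoeff] using (isZSFund_iff_s11.mp hM).units_conj zsSymmetry

end ZakharovShabat

theorem zs_discriminant_even_general
    (lam : ℂ) (w : ℝ → ℂ)
    (Mp Mm : ℝ → Matrix (Fin 2) (Fin 2) ℂ)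
    (hMp : IsZSFund lam w w Mp)
    (hMm : IsZSFund (-lam) w w Mm) :
    (Mp 1).trace = (Mm 1).trace := by
  rw [← hMp.units_conj_zsSymmetry.unique_s11 hMm, trace_units_conj]

theorem zs_discriminant_even
    (lam : ℂ) (w : ℝ → ℂ) (hw : Continuous w)
    (Mp Mm : ℝ → Matrix (Fin 2) (Fin 2) ℂ)
    (hMp : IsZSFund lam w w Mp)
    (hMm : IsZSFund (-lam) w w Mm) :
    (Mp 1).trace = (Mm 1).trace :=
  zs_discriminant_even_general lam w Mp Mm hMp hMm
end
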